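/- arXiv:2409.11025 — 4 statements merged into one kernel-verified Lean document; each statement's English description precedes it below -/
import Mathlib

section
/- Let f(x,y,z) = a₁₁x² + a₂₂y² + a₃₃z² + 2a₂₃yz + 2a₁₃xz + 2a₁₂xy be a ternary quadratic form with integer coefficients, A its symmetric coefficient matrix, and Ω the gcd of the six cofactors A₁₁, A₂₂, A₃₃, A₂₃, A₁₃, A₁₂ of A. Then Ω² divides det(A). -/
/-!
Since `adj (adj A) = det A • A` for `3 × 3` matrices and each entry of `adj (adj A)` is a
`2 × 2` minor of `adj A`, hence a product-difference of entries all divisible by `Ω`, the number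
`Ω²` divides `det A * a` for every entry `a` of `A`. As the entries of `A` are coprime, `Ω²`
divides `det A`.
-/

namespace Matrix

variable {n R : Type*} [Fintype n] [DecidableEq n] [CommRing R]

theorem pow_dvd_adjugate_of_forall_dvd {B : Matrix n n R} {d : R} (h : ∀ i j, d ∣ B i j)
    (i j : n) : d ^ (Fintype.card n - 1) ∣ B.adjugate i j := by
  choose C hC using h
  have hB : B = d • Matrix.of C := by ext i j; exact hC i j
  rw [hB, adjugate_smul]
  exact dvd_mul_right _ _

theorem pow_dvd_det_pow_mul_of_forall_dvd_adjugate {A : Matrix n n R} {d : R}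
    (hn : Fintype.card n ≠ 1) (h : ∀ i j, d ∣ A.adjugate i j) (i j : n) :
    d ^ (Fintype.card n - 1) ∣ A.det ^ (Fintype.card n - 2) * A i j := by
  simpa [adjugate_adjugate A hn] using pow_dvd_adjugate_of_forall_dvd h i j

def upperEntriesGcd (M : Matrix (Fin 3) (Fin 3) ℤ) : ℕ :=
  Int.gcd (Int.gcd (Int.gcd (Int.gcd (Int.gcd (M 0 0) (M 1 1)) (M 2 2))
    (M 1 2)) (M 0 2)) (M 0 1)

theorem IsSymm.dvd_upperEntriesGcd_iff {M : Matrix (Fin 3) (Fin 3) ℤ} (hM : M.IsSymm) (c : ℤ) :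
    c ∣ (M.upperEntriesGcd : ℤ) ↔ ∀ i j, c ∣ M i j := by
  have hsymm (i j) : M j i = M i j := hM.apply i j
  simp only [upperEntriesGcd, Int.coe_gcd, dvd_gcd_iff, Fin.forall_fin_succ, Fin.succ_zero_eq_one,
    Fin.succ_one_eq_two, IsEmpty.forall_iff, hsymm 1 0, hsymm 2 0, hsymm 2 1]
  tauto

theorem upperEntriesGcd_smul (d : ℤ) (M : Matrix (Fin 3) (Fin 3) ℤ) :
    (d • M).upperEntriesGcd = d.natAbs * M.upperEntriesGcd := by
  simp only [upperEntriesGcd, smul_apply, smul_eq_mul, Int.gcd_eq_natAbs, Int.natAbs_mul,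
    Int.natAbs_natCast, Nat.gcd_mul_left]

end Matrix

theorem stmt_0_general (A : Matrix (Fin 3) (Fin 3) ℤ) (hsymm : A.IsSymm)
    (hprim : Int.gcd (Int.gcd (Int.gcd (Int.gcd (Int.gcd (A 0 0) (A 1 1)) (A 2 2))
      (A 1 2)) (A 0 2)) (A 0 1) = 1)
    (Ω : ℕ)
    (hΩ : Ω = Int.gcd (Int.gcd (Int.gcd (Int.gcd (Int.gcd (A.adjugate 0 0) (A.adjugate 1 1))
      (A.adjugate 2 2)) (A.adjugate 1 2)) (A.adjugate 0 2)) (A.adjugate 0 1)) :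
    (Ω : ℤ) ^ 2 ∣ A.det := by
  have hΩ_dvd : ∀ i j, (Ω : ℤ) ∣ A.adjugate i j :=
    (hsymm.adjugate.dvd_upperEntriesGcd_iff _).1 (by rw [hΩ]; rfl)
  have hdet_mul : ∀ i j, (Ω : ℤ) ^ 2 ∣ A.det * A i j := by
    simpa using Matrix.pow_dvd_det_pow_mul_of_forall_dvd_adjugate (by simp) hΩ_dvd
  have hdet_smul := ((hsymm.smul A.det).dvd_upperEntriesGcd_iff ((Ω : ℤ) ^ 2)).2 hdet_mul
  rw [Matrix.upperEntriesGcd_smul, Matrix.upperEntriesGcd, hprim, mul_one] at hdet_smul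
  exact Int.dvd_natAbs.1 hdet_smul

/-- For a primitive nondegenerate symmetric 3×3 integer matrix `A` (a ternary
quadratic form), the square of the gcd `Ω` of the six cofactors divides `det A`. -/
theorem stmt_0 (A : Matrix (Fin 3) (Fin 3) ℤ) (hsymm : A.IsSymm)
    (hprim : Int.gcd (Int.gcd (Int.gcd (Int.gcd (Int.gcd (A 0 0) (A 1 1)) (A 2 2))
      (A 1 2)) (A 0 2)) (A 0 1) = 1)
    (hdet : A.det ≠ 0)
    (Ω : ℕ)
    (hΩ : Ω = Int.gcd (Int.gcd (Int.gcd (Int.gcd (Int.gcd (A.adjugate 0 0) (A.adjugate 1 1))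
      (A.adjugate 2 2)) (A.adjugate 1 2)) (A.adjugate 0 2)) (A.adjugate 0 1)) :
    (Ω : ℤ) ^ 2 ∣ A.det :=
  stmt_0_general A hsymm hprim Ω hΩ
end

section
/- Let ℓ be an odd prime, and ρ(x,z) = ax² + txz + bz² a binary quadratic form over ℤ with discriminant D = t² − 4ab, with ℓ ∤ aD. Then the number of h ∈ {0, …, ℓ−1} ∪ {∞} (where the value at ∞ is a and at h is ah² + th + b) for which −ρ_h is a nonzero quadratic residue mod ℓ equals (ℓ − (D/ℓ))/2, where (D/ℓ) is the Legendre symbol. -/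
/-!
Work in `F = 𝔽_ℓ` with quadratic character `χ` and `f(x) = Ax² + Tx + B`. Since `χ` takes
values in `{0, ±1}`, `2·[χ(y) = 1] = χ(y)² + χ(y)`, so twice the affine count is
`∑ₓ χ(-f x)² + χ(-1) ∑ₓ χ(f x)`. The first sum is `ℓ` minus the number `1 + χ(D)` of roots
of `f`. For the second, completing the square gives `χ(A) ∑ₓ χ(f x) = ∑ᵤ χ(u² - D)`, which
is `-1` by the Jacobi sum `J(χ, χ) = -χ(-1)`. Hence the affine count is
`(ℓ - 1 - χ(D) - χ(-A)) / 2`, and the point at infinity adds `[χ(-A) = 1]`.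
-/

open Finset

theorem MulChar.IsQuadratic.two_mul_ite_eq_one {R : Type*} [CommMonoid R] {χ : MulChar R ℤ}
    (hχ : χ.IsQuadratic) (y : R) : 2 * (if χ y = 1 then 1 else 0 : ℤ) = χ y ^ 2 + χ y := by
  rcases hχ y with h | h | h <;> simp [h]

section FiniteField

variable {F : Type*} [Field F] [Fintype F]

theorem sum_comp_mul_add {M : Type*} [AddCommMonoid M] {α : F} (hα : α ≠ 0) (β : F)
    (g : F → M) : ∑ x, g (α * x + β) = ∑ x, g x :=
  Fintype.sum_equiv ((Equiv.mulLeft₀ α hα).trans (Equiv.addRight β)) _ _ fun _ => rfl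

variable [DecidableEq F]

/-- The fibre of `u ↦ u²` over `c` has `χ(c) + 1` elements. -/
theorem sum_comp_sq_eq_sum_quadraticChar_add_one_mul (hF : ringChar F ≠ 2) (f : F → ℤ) :
    ∑ u, f (u ^ 2) = ∑ c, (quadraticChar F c + 1) * f c := by
  rw [← sum_fiberwise univ (· ^ 2)]
  refine sum_congr rfl fun c _ => ?_
  rw [sum_congr rfl fun u hu => congrArg f (mem_filter.mp hu).2, sum_const, nsmul_eq_mul,
    ← quadraticChar_card_sqrts hF c, Set.toFinset_ofPred]

theorem sum_quadraticChar_mul_sub (hF : ringChar F ≠ 2) {D : F} (hD : D ≠ 0) :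
    ∑ c, quadraticChar F (c * (c - D)) = -1 := by
  have hJ := jacobiSum_nontrivial_inv (quadraticChar_ne_one hF)
  rw [(quadraticChar_isQuadratic F).inv, jacobiSum] at hJ
  have hsubst (x : F) : quadraticChar F (D * x * (D * x - D))
      = quadraticChar F (-1) * (quadraticChar F x * quadraticChar F (1 - x)) := by
    rw [show D * x * (D * x - D) = D ^ 2 * (-1 * (x * (1 - x))) by ring, map_mul,
      quadraticChar_sq_one' hD, one_mul, map_mul, map_mul]
  calc ∑ c, quadraticChar F (c * (c - D))
      = ∑ x, quadraticChar F (D * x * (D * x - D)) := by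
        simpa using (sum_comp_mul_add hD 0 fun c => quadraticChar F (c * (c - D))).symm
    _ = quadraticChar F (-1) * -quadraticChar F (-1) := by simp only [hsubst, ← mul_sum, hJ]
    _ = -1 := by rw [mul_neg, ← sq, quadraticChar_sq_one (neg_ne_zero.2 one_ne_zero)]

theorem sum_quadraticChar_sq_sub (hF : ringChar F ≠ 2) {D : F} (hD : D ≠ 0) :
    ∑ u, quadraticChar F (u ^ 2 - D) = -1 := by
  have hshift : ∑ c, quadraticChar F (c - D) = 0 := by
    rw [← quadraticChar_sum_zero hF]
    exact Fintype.sum_equiv (Equiv.subRight D) _ _ fun _ => rfl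
  rw [sum_comp_sq_eq_sum_quadraticChar_add_one_mul hF (fun c => quadraticChar F (c - D))]
  simp only [add_mul, one_mul, sum_add_distrib, hshift, ← map_mul, sum_quadraticChar_mul_sub hF hD,
    add_zero]

theorem sum_quadraticChar_quadratic (hF : ringChar F ≠ 2) {A T B : F} (hA : A ≠ 0)
    (hD : T ^ 2 - 4 * A * B ≠ 0) :
    ∑ x, quadraticChar F (A * x ^ 2 + T * x + B) = -quadraticChar F A := by
  have h2A : 2 * A ≠ 0 := mul_ne_zero (Ring.two_ne_zero hF) hA
  have hsq (x : F) : quadraticChar F A * quadraticChar F (A * x ^ 2 + T * x + B)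
      = quadraticChar F ((2 * A * x + T) ^ 2 - (T ^ 2 - 4 * A * B)) := by
    rw [show (2 * A * x + T) ^ 2 - (T ^ 2 - 4 * A * B) = 2 ^ 2 * (A * (A * x ^ 2 + T * x + B))
      by ring, map_mul, quadraticChar_sq_one' (Ring.two_ne_zero hF), one_mul, map_mul]
  have hsum : quadraticChar F A * ∑ x, quadraticChar F (A * x ^ 2 + T * x + B) = -1 := by
    rw [mul_sum]
    simp only [hsq]
    rw [sum_comp_mul_add h2A T fun u => quadraticChar F (u ^ 2 - (T ^ 2 - 4 * A * B)),
      sum_quadraticChar_sq_sub hF hD]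
  calc ∑ x, quadraticChar F (A * x ^ 2 + T * x + B)
      = quadraticChar F A ^ 2 * ∑ x, quadraticChar F (A * x ^ 2 + T * x + B) := by
        rw [quadraticChar_sq_one hA, one_mul]
    _ = -quadraticChar F A := by rw [sq, mul_assoc, hsum, mul_neg_one]

theorem card_filter_quadratic_eq_zero (hF : ringChar F ≠ 2) {A T B : F} (hA : A ≠ 0) :
    (#{x | A * x ^ 2 + T * x + B = 0} : ℤ) = quadraticChar F (T ^ 2 - 4 * A * B) + 1 := by
  have h2A : 2 * A ≠ 0 := mul_ne_zero (Ring.two_ne_zero hF) hA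
  have h4A : 2 ^ 2 * A ≠ 0 := mul_ne_zero (pow_ne_zero 2 (Ring.two_ne_zero hF)) hA
  have hroot (x : F) : A * x ^ 2 + T * x + B = 0 ↔ (2 * A * x + T) ^ 2 = T ^ 2 - 4 * A * B := by
    rw [← sub_eq_zero (a := (2 * A * x + T) ^ 2),
      show (2 * A * x + T) ^ 2 - (T ^ 2 - 4 * A * B) = 2 ^ 2 * A * (A * x ^ 2 + T * x + B)
        by ring, mul_eq_zero, or_iff_right h4A]
  rw [← quadraticChar_card_sqrts hF, Set.toFinset_ofPred, card_filter, card_filter]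
  simp only [hroot]
  rw [sum_comp_mul_add h2A T fun u => if u ^ 2 = T ^ 2 - 4 * A * B then 1 else 0]

theorem quadraticChar_sq_eq_one_sub_ite (y : F) :
    quadraticChar F y ^ 2 = 1 - if y = 0 then 1 else 0 := by
  by_cases hy : y = 0
  · simp [hy]
  · rw [quadraticChar_sq_one hy, if_neg hy, sub_zero]

theorem two_mul_card_filter_quadraticChar_neg_eq_one (hF : ringChar F ≠ 2) {A T B : F}
    (hA : A ≠ 0) (hD : T ^ 2 - 4 * A * B ≠ 0) :
    2 * (#{x | quadraticChar F (-(A * x ^ 2 + T * x + B)) = 1} : ℤ)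
      = Fintype.card F - 1 - quadraticChar F (T ^ 2 - 4 * A * B) - quadraticChar F (-A) := by
  set χf : F → ℤ := fun x => quadraticChar F (-(A * x ^ 2 + T * x + B))
  have hsq : ∑ x, χf x ^ 2 = Fintype.card F - (quadraticChar F (T ^ 2 - 4 * A * B) + 1) := by
    simp only [χf, quadraticChar_sq_eq_one_sub_ite, neg_eq_zero, sum_sub_distrib, sum_boole,
      card_filter_quadratic_eq_zero hF hA, sum_const, card_univ, nsmul_one]
  have hlin : ∑ x, χf x = -quadraticChar F (-A) := by
    have hneg (y : F) : quadraticChar F (-y) = quadraticChar F (-1) * quadraticChar F y := by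
      rw [← map_mul, neg_one_mul]
    rw [sum_congr rfl fun x _ => hneg _, ← mul_sum, sum_quadraticChar_quadratic hF hA hD, hneg A,
      mul_neg]
  calc 2 * (#{x | χf x = 1} : ℤ) = ∑ x, (χf x ^ 2 + χf x) := by
        rw [← sum_boole, mul_sum]
        exact sum_congr rfl fun x _ => (quadraticChar_isQuadratic F).two_mul_ite_eq_one _
    _ = _ := by rw [sum_add_distrib, hsq, hlin]; ring

theorem card_filter_quadraticChar_neg_eq_one_add_ite (hF : ringChar F ≠ 2) {A T B : F}
    (hA : A ≠ 0) (hD : T ^ 2 - 4 * A * B ≠ 0) :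
    (#{x | quadraticChar F (-(A * x ^ 2 + T * x + B)) = 1} : ℤ)
        + (if quadraticChar F (-A) = 1 then 1 else 0)
      = (Fintype.card F - quadraticChar F (T ^ 2 - 4 * A * B)) / 2 := by
  have h2 := two_mul_card_filter_quadraticChar_neg_eq_one hF hA hD
  rcases quadraticChar_dichotomy (neg_ne_zero.2 hA) with h | h <;> rw [h] at h2
  · rw [h, if_pos rfl]; omega
  · rw [h, if_neg (by decide)]; omega

end FiniteField

theorem ZMod.card_filter_range_natCast (n : ℕ) [NeZero n] (P : ZMod n → Prop)
    [DecidablePred P] : #{x ∈ range n | P ((x : ℕ) : ZMod n)} = #{x : ZMod n | P x} :=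
  card_nbij' Nat.cast ZMod.val (fun x hx => by simp_all) (fun v hv => by simp_all [ZMod.val_lt])
    (fun x hx => ZMod.val_cast_of_lt (mem_range.1 (mem_filter.1 hx).1))
    (fun v _ => ZMod.natCast_zmod_val v)

/-- Among the `ℓ+1` values `v_∞ = a` and `v_h = ah²+th+b` (`0 ≤ h ≤ ℓ−1`) of a binary
quadratic form of discriminant `D = t²−4ab` with `ℓ ∤ aD`, the number of those for which
`−v` is a nonzero quadratic residue mod `ℓ` equals `(ℓ − (D/ℓ))/2`. -/
theorem stmt_5 (ℓ : ℕ) [Fact ℓ.Prime] (hℓ : ℓ ≠ 2) (a t b : ℤ)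
    (h : ¬ (ℓ : ℤ) ∣ a * (t ^ 2 - 4 * a * b)) :
    (((Finset.range ℓ).filter
        (fun x : ℕ => legendreSym ℓ (-(a * (x : ℤ) ^ 2 + t * x + b)) = 1)).card : ℤ)
      + (if legendreSym ℓ (-a) = 1 then 1 else 0)
      = ((ℓ : ℤ) - legendreSym ℓ (t ^ 2 - 4 * a * b)) / 2 := by
  have hF : ringChar (ZMod ℓ) ≠ 2 := by rwa [ZMod.ringChar_zmod_n]
  have hA : (a : ZMod ℓ) ≠ 0 := fun ha =>
    h (((ZMod.intCast_zmod_eq_zero_iff_dvd a ℓ).1 ha).mul_right _)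
  have hD : ((t ^ 2 - 4 * a * b : ℤ) : ZMod ℓ) ≠ 0 := fun hd =>
    h (((ZMod.intCast_zmod_eq_zero_iff_dvd _ ℓ).1 hd).mul_left _)
  push_cast at hD
  have key := card_filter_quadraticChar_neg_eq_one_add_ite hF hA hD
  rw [ZMod.card ℓ, ← ZMod.card_filter_range_natCast ℓ] at key
  simp only [legendreSym]
  push_cast
  exact key
end

section
/- Let B be a quaternion algebra over ℚ with basis 1, α, β, αβ where α² = −cp, β² = −q, βα = −αβ, for primes p, q, c with q odd and r an integer satisfying r² + cp ≡ 0 (mod q). Then the ℤ-lattice O = ℤ + ℤ(1+β)/2 + ℤ α(1+β)/2 + ℤ (r+α)β/q, with q ≡ 3 (mod 8), is closed under multiplication, i.e., is an order in B. -/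
/-!
Put `e = (1 + β)/2` and `g = (r + α)β/q`. With `q = 4s + 3` and `r² + cp = qm` one has
`e² = e - (s + 1)`, `g² = -m`, `eg + ge = g - r` and `α(1 + β)/2 = eg + r - re + (2s + 1)g`,
so `O = ℤ + ℤe + ℤg + ℤeg`. A lattice of this shape is closed under multiplication whenever
`e² ∈ ℤ + ℤe`, `g² ∈ ℤ + ℤg` and `eg + ge ∈ ℤ + ℤe + ℤg`: these relations make it stable under
left multiplication by `e` and by `g`.
-/

open Submodule Quaternion

section SpanMul

variable {R A : Type*} [CommSemiring R] [Semiring A] [Algebra R A]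

theorem Submodule.mul_mem_of_mem_span_left {S : Set A} {M : Submodule R A} {z y : A}
    (hz : z ∈ span R S) (h : ∀ s ∈ S, s * y ∈ M) : z * y ∈ M :=
  span_le (p := M.comap (LinearMap.mulRight R y)) |>.2 h hz

theorem Submodule.mul_mem_of_mem_span_right {S : Set A} {M : Submodule R A} {x z : A}
    (hz : z ∈ span R S) (h : ∀ s ∈ S, x * s ∈ M) : x * z ∈ M :=
  span_le (p := M.comap (LinearMap.mulLeft R x)) |>.2 h hz

end SpanMul

theorem mul_mem_span_of_quadratic {A : Type*} [Ring A] {x y : A}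
    (hx : x * x ∈ span ℤ {1, x}) (hy : y * y ∈ span ℤ {1, y})
    (hxy : x * y + y * x ∈ span ℤ {1, x, y}) {u v : A}
    (hu : u ∈ span ℤ {1, x, y, x * y}) (hv : v ∈ span ℤ {1, x, y, x * y}) :
    u * v ∈ span ℤ {1, x, y, x * y} := by
  set L := span ℤ ({1, x, y, x * y} : Set A)
  have x_mem : x ∈ L := subset_span (by simp)
  have y_mem : y ∈ L := subset_span (by simp)
  have xy_mem : x * y ∈ L := subset_span (by simp)
  have hxL : x * x ∈ L := span_mono (by simp [Set.insert_subset_iff]) hx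
  have hyL : y * y ∈ L := span_mono (by simp [Set.insert_subset_iff]) hy
  have hxyL : x * y + y * x ∈ L := span_mono (by simp [Set.insert_subset_iff]) hxy
  have x_mul : ∀ w ∈ L, x * w ∈ L := by
    intro w hw
    refine mul_mem_of_mem_span_right hw ?_
    simp only [Set.forall_mem_insert, Set.mem_singleton_iff, forall_eq, mul_one]
    refine ⟨x_mem, hxL, xy_mem, ?_⟩
    rw [← mul_assoc]
    exact mul_mem_of_mem_span_left hx (by simpa using ⟨y_mem, xy_mem⟩)
  have y_mul : ∀ w ∈ L, y * w ∈ L := by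
    intro w hw
    refine mul_mem_of_mem_span_right hw ?_
    simp only [Set.forall_mem_insert, Set.mem_singleton_iff, forall_eq, mul_one]
    refine ⟨y_mem, ?_, hyL, ?_⟩
    · rw [← add_sub_cancel_left (x * y) (y * x)]
      exact sub_mem hxyL xy_mem
    · rw [show y * (x * y) = (x * y + y * x) * y - x * (y * y) by noncomm_ring]
      exact sub_mem (mul_mem_of_mem_span_left hxy (by simpa using ⟨y_mem, xy_mem, hyL⟩))
        (mul_mem_of_mem_span_right hy (by simpa using ⟨x_mem, xy_mem⟩))
  refine mul_mem_of_mem_span_left hu ?_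
  simp only [Set.forall_mem_insert, Set.mem_singleton_iff, forall_eq, one_mul, mul_assoc]
  exact ⟨hv, x_mul v hv, y_mul v hv, x_mul _ (y_mul v hv)⟩

namespace QuatOrder

variable {n q : ℚ} {r : ℤ}

local notation "𝐢" => (⟨0, 1, 0, 0⟩ : ℍ[ℚ, -n, -q])
local notation "𝐣" => (⟨0, 0, 1, 0⟩ : ℍ[ℚ, -n, -q])
local notation "𝐞" => (2 : ℚ)⁻¹ • (1 + 𝐣)
local notation "𝐠" => q⁻¹ • (((r : ℚ) • 1 + 𝐢) * 𝐣)

theorem e_mul_self (s : ℤ) (hq : q = 4 * s + 3) : 𝐞 * 𝐞 = 𝐞 - (s + 1) • 1 := by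
  subst hq
  ext <;> simp <;> ring

theorem g_mul_self (m : ℤ) (hq : q ≠ 0) (hn : r ^ 2 + n = q * m) : 𝐠 * 𝐠 = -m • 1 := by
  obtain rfl : n = q * m - r ^ 2 := by linarith
  ext <;> simp
  field_simp
  ring

theorem e_mul_g_add_g_mul_e (hq : q ≠ 0) : 𝐞 * 𝐠 + 𝐠 * 𝐞 = 𝐠 - r • 1 := by
  ext <;> simp <;> field_simp <;> ring

theorem half_i_mul_one_add_j (s : ℤ) (hq : q = 4 * s + 3) :
    (2 : ℚ)⁻¹ • (𝐢 * (1 + 𝐣)) = 𝐞 * 𝐠 + r • 1 - r • 𝐞 + (2 * s + 1 : ℤ) • 𝐠 := by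
  have hq0 : (4 * s + 3 : ℚ) ≠ 0 := by exact_mod_cast (by omega : 4 * s + 3 ≠ 0)
  subst hq
  simp only [← Int.cast_smul_eq_zsmul ℚ]
  ext <;> simp <;> field_simp <;> ring

theorem span_eq_span_one_e_g_mul (s : ℤ) (hq : q = 4 * s + 3) :
    span ℤ {1, 𝐞, (2 : ℚ)⁻¹ • (𝐢 * (1 + 𝐣)), 𝐠} = span ℤ {1, 𝐞, 𝐠, 𝐞 * 𝐠} := by
  have hf := half_i_mul_one_add_j (r := r) (n := n) s hq
  refine span_eq_span ?_ ?_ <;>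
    simp only [Set.insert_subset_iff, Set.singleton_subset_iff, SetLike.mem_coe]
  · refine ⟨subset_span (by simp), subset_span (by simp), ?_, subset_span (by simp)⟩
    rw [hf]
    refine add_mem (sub_mem (add_mem (subset_span ?_) (smul_mem _ _ (subset_span ?_)))
      (smul_mem _ _ (subset_span ?_))) (smul_mem _ _ (subset_span ?_)) <;> simp
  · refine ⟨subset_span (by simp), subset_span (by simp), subset_span (by simp), ?_⟩
    rw [show 𝐞 * 𝐠 = (2 : ℚ)⁻¹ • (𝐢 * (1 + 𝐣)) - r • 1 + r • 𝐞 - (2 * s + 1 : ℤ) • 𝐠 by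
      rw [hf]; abel]
    refine sub_mem (add_mem (sub_mem (subset_span ?_) (smul_mem _ _ (subset_span ?_)))
      (smul_mem _ _ (subset_span ?_))) (smul_mem _ _ (subset_span ?_)) <;> simp

theorem mul_mem (s m : ℤ) (hq : q = 4 * s + 3) (hn : r ^ 2 + n = q * m) {u v : ℍ[ℚ, -n, -q]}
    (hu : u ∈ span ℤ {1, 𝐞, (2 : ℚ)⁻¹ • (𝐢 * (1 + 𝐣)), 𝐠})
    (hv : v ∈ span ℤ {1, 𝐞, (2 : ℚ)⁻¹ • (𝐢 * (1 + 𝐣)), 𝐠}) :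
    u * v ∈ span ℤ {1, 𝐞, (2 : ℚ)⁻¹ • (𝐢 * (1 + 𝐣)), 𝐠} := by
  have hq0 : q ≠ 0 := by rw [hq]; exact_mod_cast (by omega : 4 * s + 3 ≠ 0)
  rw [span_eq_span_one_e_g_mul s hq] at hu hv ⊢
  refine mul_mem_span_of_quadratic ?_ ?_ ?_ hu hv
  · rw [e_mul_self s hq]
    exact sub_mem (subset_span (by simp)) (smul_mem _ _ (subset_span (by simp)))
  · rw [g_mul_self m hq0 hn]
    exact smul_mem _ _ (subset_span (by simp))
  · rw [e_mul_g_add_g_mul_e hq0]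
    exact sub_mem (subset_span (by simp)) (smul_mem _ _ (subset_span (by simp)))

end QuatOrder

open Quaternion in
theorem stmt_12_general (p c q : ℕ)
    (hq8 : q % 8 = 3) (r : ℤ) (hr : (q : ℤ) ∣ r ^ 2 + (c : ℤ) * p)
    (α β : ℍ[ℚ, -((c : ℚ) * p), -(q : ℚ)])
    (hα : α = ⟨0, 1, 0, 0⟩) (hβ : β = ⟨0, 0, 1, 0⟩)
    (O : Submodule ℤ ℍ[ℚ, -((c : ℚ) * p), -(q : ℚ)])
    (hO : O = Submodule.span ℤ
      {1, (2 : ℚ)⁻¹ • (1 + β), (2 : ℚ)⁻¹ • (α * (1 + β)),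
        (q : ℚ)⁻¹ • (((r : ℚ) • 1 + α) * β)}) :
    ∀ x ∈ O, ∀ y ∈ O, x * y ∈ O := by
  subst hα hβ hO
  obtain ⟨m, hm⟩ := hr
  have hq4 : (q : ℚ) = 4 * ((q / 4 : ℕ) : ℤ) + 3 := by
    norm_cast
    omega
  intro x hx y hy
  exact QuatOrder.mul_mem (q / 4 : ℕ) m hq4 (by exact_mod_cast hm) hx hy

open Quaternion in
/-- The lattice `O = ℤ + ℤ(1+β)/2 + ℤ α(1+β)/2 + ℤ (r+α)β/q` in the quaternion algebra
`(−cp, −q / ℚ)` is closed under multiplication (is an order). -/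
theorem stmt_12 (p c q : ℕ) (hp : p.Prime) (hc : c.Prime) (hq : q.Prime)
    (hq8 : q % 8 = 3) (r : ℤ) (hr : (q : ℤ) ∣ r ^ 2 + (c : ℤ) * p)
    (α β : ℍ[ℚ, -((c : ℚ) * p), -(q : ℚ)])
    (hα : α = ⟨0, 1, 0, 0⟩) (hβ : β = ⟨0, 0, 1, 0⟩)
    (O : Submodule ℤ ℍ[ℚ, -((c : ℚ) * p), -(q : ℚ)])
    (hO : O = Submodule.span ℤ
      {1, (2 : ℚ)⁻¹ • (1 + β), (2 : ℚ)⁻¹ • (α * (1 + β)),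
        (q : ℚ)⁻¹ • (((r : ℚ) • 1 + α) * β)}) :
    ∀ x ∈ O, ∀ y ∈ O, x * y ∈ O :=
  stmt_12_general p c q hq8 r hr α β hα hβ O hO
end

section
/- Let Q(x,y,z) = 2ax² + 2by² + 2cz² + 2uyz + 2vxz + 2wxy be an integral ternary quadratic form with discriminant N = 4abc + uvw − au² − bv² − cw², and let O = ℤ + ℤi + ℤj + ℤk be the even Clifford algebra with multiplication i² = ui − bc, j² = vj − ac, k² = wk − ab, jk = a(u−i), ki = b(v−j), ij = c(w−k). Then the discriminant of the order O equals N². -/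
/-!
Because the standard involution is `x ↦ trd x - x`, the bilinear form `trd (x * star y)` of the
basis `1, i, j, k` is read off from the multiplication table: `trd i = u`,
`i * star i = b * c`, and `trd (i * star j) = trd i * trd j - trd (i * j) = u * v - c * w`, and
cyclically. The determinant of this explicit Gram matrix expands to `N ^ 2`.
-/

open Quaternion

theorem mul_star_eq_smul_one_of_mul_self_eq {R A : Type*} [CommRing R] [Ring A] [Algebra R A]
    [Star A] {x : A} {t n : R} (hs : star x = t • 1 - x) (hsq : x * x = t • x - n • 1) :
    x * star x = n • 1 := by
  rw [hs, mul_sub, mul_smul_comm, mul_one, hsq, sub_sub_cancel]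

theorem Matrix.det_evenCliffordTraceForm {R : Type*} [CommRing R] (a b c u v w : R) :
    !![2, u, v, w;
       u, 2 * b * c, u * v - c * w, u * w - b * v;
       v, u * v - c * w, 2 * a * c, v * w - a * u;
       w, u * w - b * v, v * w - a * u, 2 * a * b].det =
      (4 * a * b * c + u * v * w - a * u ^ 2 - b * v ^ 2 - c * w ^ 2) ^ 2 := by
  simp [Matrix.det_succ_row_zero, Fin.sum_univ_succ, Fin.succAbove]
  ring

namespace QuaternionAlgebra

variable {R : Type*} [CommRing R] {c₁ c₂ : R}

theorem two_mul_re_of_star_eq {x : ℍ[R, c₁, c₂]} {t : R} (h : star x = t • 1 - x) :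
    2 * x.re = t := by
  have h := congrArg re h
  simp only [re_star, zero_mul, add_zero, re_sub, re_smul, re_one, smul_eq_mul, mul_one] at h
  linear_combination h

theorem re_mul_star_comm (x y : ℍ[R, c₁, c₂]) : (y * star x).re = (x * star y).re := by
  rw [← star_star y, ← star_mul, re_star, star_star]; simp

theorem two_mul_re_mul_star_of_mul_eq {x y z : ℍ[R, c₁, c₂]} {s t c w : R}
    (hx : 2 * x.re = s) (hy : star y = t • 1 - y) (hz : 2 * z.re = w)
    (hxy : x * y = c • (w • 1 - z)) :
    2 * (x * star y).re = s * t - c * w := by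
  rw [hy, mul_sub, mul_smul_comm, mul_one, hxy]
  simp only [re_sub, re_smul, re_one, smul_eq_mul, mul_one]
  linear_combination t * hx + c * hz

end QuaternionAlgebra

open Quaternion in
/-- The even Clifford order of a ternary quadratic form of discriminant `N` has
discriminant `N²`: the determinant of the reduced-trace Gram matrix of the basis
`1, i, j, k` equals `N²`. -/
theorem stmt_13 (c₁ c₂ : ℚ) (a b c u v w N : ℤ)
    (hN : N = 4 * a * b * c + u * v * w - a * u ^ 2 - b * v ^ 2 - c * w ^ 2)
    (i j k : ℍ[ℚ, c₁, c₂])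
    (hi2 : i * i = (u : ℚ) • i - ((b : ℚ) * c) • (1 : ℍ[ℚ, c₁, c₂]))
    (hj2 : j * j = (v : ℚ) • j - ((a : ℚ) * c) • (1 : ℍ[ℚ, c₁, c₂]))
    (hk2 : k * k = (w : ℚ) • k - ((a : ℚ) * b) • (1 : ℍ[ℚ, c₁, c₂]))
    (hjk : j * k = (a : ℚ) • ((u : ℚ) • (1 : ℍ[ℚ, c₁, c₂]) - i))
    (hki : k * i = (b : ℚ) • ((v : ℚ) • (1 : ℍ[ℚ, c₁, c₂]) - j))
    (hij : i * j = (c : ℚ) • ((w : ℚ) • (1 : ℍ[ℚ, c₁, c₂]) - k))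
    (hsi : star i = (u : ℚ) • (1 : ℍ[ℚ, c₁, c₂]) - i)
    (hsj : star j = (v : ℚ) • (1 : ℍ[ℚ, c₁, c₂]) - j)
    (hsk : star k = (w : ℚ) • (1 : ℍ[ℚ, c₁, c₂]) - k) :
    (Matrix.of fun s t : Fin 4 =>
        2 * ((![1, i, j, k] s) * star (![1, i, j, k] t)).re).det = (N : ℚ) ^ 2 := by
  have tri := QuaternionAlgebra.two_mul_re_of_star_eq hsi
  have trj := QuaternionAlgebra.two_mul_re_of_star_eq hsj
  have trk := QuaternionAlgebra.two_mul_re_of_star_eq hsk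
  have nrd_i := mul_star_eq_smul_one_of_mul_self_eq hsi hi2
  have nrd_j := mul_star_eq_smul_one_of_mul_self_eq hsj hj2
  have nrd_k := mul_star_eq_smul_one_of_mul_self_eq hsk hk2
  have trd_ij := QuaternionAlgebra.two_mul_re_mul_star_of_mul_eq tri hsj trk hij
  have trd_jk := QuaternionAlgebra.two_mul_re_mul_star_of_mul_eq trj hsk tri hjk
  have trd_ki := QuaternionAlgebra.two_mul_re_mul_star_of_mul_eq trk hsi trj hki
  have gram : (Matrix.of fun s t : Fin 4 =>
        2 * ((![1, i, j, k] s) * star (![1, i, j, k] t)).re) =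
      !![2, (u : ℚ), v, w;
         u, 2 * b * c, u * v - c * w, u * w - b * v;
         v, u * v - c * w, 2 * a * c, v * w - a * u;
         w, u * w - b * v, v * w - a * u, 2 * a * b] := by
    ext s t
    fin_cases s <;> fin_cases t <;>
      simp [-QuaternionAlgebra.re_mul, nrd_i, nrd_j, nrd_k, tri, trj, trk, trd_ij, trd_jk, trd_ki,
        QuaternionAlgebra.re_mul_star_comm i j, QuaternionAlgebra.re_mul_star_comm j k,
        QuaternionAlgebra.re_mul_star_comm k i] <;> ring
  rw [gram, Matrix.det_evenCliffordTraceForm, hN]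
  push_cast
  ring
end
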